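/- Let N be a positive integer and let S be a nonempty subset of ZMod N whose indicator function 1_S satisfies |S| · |supp 𝓕(1_S)| = N. Then S is a coset of an additive subgroup of ZMod N, i.e. there exist a : ZMod N and an additive subgroup H of ZMod N with S = a + H. (This is the 'furthermore' clause of Theorem 3.11 of the paper — an extremal bi-partial isometry which is a projection is a shift of a biprojection — specialized to L^∞(ℤ/Nℤ).) -/

import Mathlib

/-!
Write `f̂` for the unnormalised Fourier transform of `1_S` and `T` for its support. Each
`‖f̂ k‖ ≤ |S|`, while Parseval gives `∑ₖ ‖f̂ k‖² = N |S|`; so `|S| |T| = N` forces `‖f̂ k‖ = |S|`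
on `T`. That is equality in the triangle inequality for `f̂ k = ∑_{x ∈ S} e(-xk/N)`, so `x ↦ xk`
is constant on `S` for every `k ∈ T`, i.e. `S ⊆ a + H` with `H` the annihilator of `T`. The
same Parseval count applied to `a + H` gives `|H| |T| ≤ N = |S| |T|`, hence `S = a + H`.
-/

open Complex Finset

/-- The unitary discrete Fourier transform on `ZMod N`. -/
noncomputable def dft (N : ℕ) [NeZero N] (f : ZMod N → ℂ) : ZMod N → ℂ :=
  fun k => (((N : ℝ) ^ (-(1/2 : ℝ)) : ℝ) : ℂ) *
    ∑ x : ZMod N, f x *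
      Complex.exp (-2 * Real.pi * Complex.I * (k.val : ℂ) * (x.val : ℂ) / (N : ℂ))

open scoped ZMod ComplexConjugate

theorem RCLike.eq_of_norm_sum_eq_card {K ι : Type*} [RCLike K] {s : Finset ι} {u : ι → K}
    (hu : ∀ i ∈ s, ‖u i‖ = 1) (hsum : ‖∑ i ∈ s, u i‖ = #s) :
    ∀ i ∈ s, ∀ j ∈ s, u i = u j := by
  set w := conj (∑ i ∈ s, u i)
  have hw : ‖w‖ = #s := by rw [norm_conj, hsum]
  -- rotating by `w` makes the sum real and maximal, so each rotated term lies on the positive axis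
  have hnorm : ∀ i ∈ s, ‖w * u i‖ = #s := fun i hi ↦ by rw [norm_mul, hu i hi, mul_one, hw]
  have hle : ∀ i ∈ s, re (w * u i) ≤ #s := fun i hi ↦ hnorm i hi ▸ re_le_norm _
  have hre : ∑ i ∈ s, re (w * u i) = ∑ _i ∈ s, (#s : ℝ) := by
    rw [← map_sum, ← mul_sum, mul_comm, mul_conj]
    simp [hsum, sq]
  have hterm : ∀ i ∈ s, w * u i = #s := fun i hi ↦ by
    have hre_i := (sum_eq_sum_iff_of_le hle).mp hre i hi
    rw [norm_le_re_iff_eq_norm.mp ((hnorm i hi).trans hre_i.symm).le, hnorm i hi]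
    norm_cast
  intro i hi j hj
  have hw0 : w ≠ 0 := fun h0 ↦ by simp [h0, eq_comm] at hw; simp [hw] at hi
  exact mul_left_cancel₀ hw0 ((hterm i hi).trans (hterm j hj).symm)

namespace ZMod

variable {N : ℕ} [NeZero N]

theorem sum_sq_norm_dft (f : ZMod N → ℂ) :
    ∑ k, ‖𝓕 f k‖ ^ 2 = N * ∑ x, ‖f x‖ ^ 2 := by
  have h : ∑ k, 𝓕 f k * conj (𝓕 f k) = N * ∑ x, f x * conj (f x) := by
    calc ∑ k, 𝓕 f k * conj (𝓕 f k)
        = ∑ x, conj (f x) * ∑ k, stdAddChar (k * x) • 𝓕 f k := by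
          have hconj (k) : conj (𝓕 f k) = ∑ x, stdAddChar (k * x) * conj (f x) := by
            simp only [dft_apply f, map_sum, smul_eq_mul, map_mul,
              ← AddChar.map_neg_eq_conj, neg_neg, mul_comm k]
          simp only [hconj, mul_sum, smul_eq_mul]
          rw [sum_comm]
          exact sum_congr rfl fun x _ ↦ sum_congr rfl fun k _ ↦ by ring
      _ = ∑ x, conj (f x) * 𝓕 (𝓕 f) (-x) := by simp only [dft_apply (𝓕 f), mul_neg, neg_neg]
      _ = N * ∑ x, f x * conj (f x) := by
          simp only [dft_dft, neg_neg, smul_eq_mul, mul_sum]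
          exact sum_congr rfl fun x _ ↦ by ring
  simp only [mul_conj'] at h
  exact_mod_cast h

section Indicator

variable (A : Finset (ZMod N))

theorem dft_indicator_one_apply (k : ZMod N) :
    𝓕 ((A : Set (ZMod N)).indicator fun _ ↦ (1 : ℂ)) k = ∑ x ∈ A, stdAddChar (-(x * k)) := by
  simp [dft_apply, Set.indicator_apply]

theorem norm_dft_indicator_one_le (k : ZMod N) :
    ‖𝓕 ((A : Set (ZMod N)).indicator fun _ ↦ (1 : ℂ)) k‖ ≤ #A := by
  rw [dft_indicator_one_apply]
  refine (norm_sum_le _ _).trans ?_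
  simp

theorem sum_sq_norm_dft_indicator_one :
    ∑ k, ‖𝓕 ((A : Set (ZMod N)).indicator fun _ ↦ (1 : ℂ)) k‖ ^ 2 = N * #A := by
  rw [sum_sq_norm_dft]
  simp [Set.indicator_apply, apply_ite (fun z : ℂ ↦ ‖z‖ ^ 2)]

theorem norm_dft_indicator_one_eq_card_iff (k : ZMod N) :
    ‖𝓕 ((A : Set (ZMod N)).indicator fun _ ↦ (1 : ℂ)) k‖ = #A ↔
      ∀ x ∈ A, ∀ y ∈ A, x * k = y * k := by
  rw [dft_indicator_one_apply]
  refine ⟨fun h x hx y hy ↦ ?_, fun h ↦ ?_⟩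
  · have := RCLike.eq_of_norm_sum_eq_card (fun x _ ↦ by simp) h x hx y hy
    exact neg_injective (injective_stdAddChar this)
  · obtain rfl | ⟨x₀, hx₀⟩ := A.eq_empty_or_nonempty
    · simp
    rw [sum_congr rfl fun x hx ↦ by rw [h x hx x₀ hx₀], sum_const]
    simp

theorem card_mul_card_le_of_forall_mul_eq (T : Finset (ZMod N))
    (h : ∀ k ∈ T, ∀ x ∈ A, ∀ y ∈ A, x * k = y * k) : #A * #T ≤ N := by
  obtain rfl | hA := A.eq_empty_or_nonempty
  · simp
  set f : ZMod N → ℂ := (A : Set (ZMod N)).indicator fun _ ↦ 1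
  have hcard : (0 : ℝ) < #A := by exact_mod_cast hA.card_pos
  have key : (#T : ℝ) * #A ^ 2 ≤ N * #A := calc
    (#T : ℝ) * #A ^ 2 = ∑ k ∈ T, ‖𝓕 f k‖ ^ 2 := by
        rw [sum_congr rfl fun k hk ↦ by rw [(norm_dft_indicator_one_eq_card_iff A k).mpr (h k hk)],
          sum_const, nsmul_eq_mul]
    _ ≤ ∑ k, ‖𝓕 f k‖ ^ 2 := sum_le_univ_sum_of_nonneg fun _ ↦ by positivity
    _ = N * #A := sum_sq_norm_dft_indicator_one A
  have : (#A : ℝ) * #T ≤ N := le_of_mul_le_mul_right (by nlinarith) hcard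
  exact_mod_cast this

theorem norm_dft_indicator_one_eq_card_of_card_mul_ncard_support_eq
    (hA : #A * (Function.support (𝓕 ((A : Set (ZMod N)).indicator fun _ ↦ (1 : ℂ)))).ncard = N)
    {k : ZMod N} (hk : 𝓕 ((A : Set (ZMod N)).indicator fun _ ↦ (1 : ℂ)) k ≠ 0) :
    ‖𝓕 ((A : Set (ZMod N)).indicator fun _ ↦ (1 : ℂ)) k‖ = #A := by
  classical
  set f : ZMod N → ℂ := (A : Set (ZMod N)).indicator fun _ ↦ 1
  set T := (Function.support (𝓕 f)).toFinset
  rw [Set.ncard_eq_toFinset_card'] at hA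
  have hsum : ∑ k ∈ T, ‖𝓕 f k‖ ^ 2 = ∑ k ∈ T, (#A : ℝ) ^ 2 := calc
    _ = ∑ k, ‖𝓕 f k‖ ^ 2 := sum_subset (subset_univ _) fun k _ hk ↦ by simp_all [T]
    _ = N * #A := sum_sq_norm_dft_indicator_one A
    _ = ∑ k ∈ T, (#A : ℝ) ^ 2 := by
        rw [sum_const, nsmul_eq_mul, show (N : ℝ) = #A * #T by exact_mod_cast hA.symm]
        ring
  have hle : ∀ k ∈ T, ‖𝓕 f k‖ ^ 2 ≤ (#A : ℝ) ^ 2 := fun k _ ↦ by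
    gcongr
    exact norm_dft_indicator_one_le A k
  have := (sum_eq_sum_iff_of_le hle).mp hsum k (by simpa [T] using hk)
  exact (pow_left_inj₀ (norm_nonneg _) (Nat.cast_nonneg _) two_ne_zero).mp this

end Indicator

end ZMod

theorem dft_eq_smul (N : ℕ) [NeZero N] (f : ZMod N → ℂ) :
    dft N f = (((N : ℝ) ^ (-(1/2 : ℝ)) : ℝ) : ℂ) • 𝓕 f := by
  ext k
  simp only [dft, Pi.smul_apply, smul_eq_mul, ZMod.dft_apply]
  congr 1
  refine sum_congr rfl fun x _ ↦ ?_
  have hchar : (((-(x.val * k.val : ℤ)) : ℤ) : ZMod N) = -(x * k) := by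
    push_cast
    rw [ZMod.natCast_val, ZMod.natCast_val, ZMod.cast_id, ZMod.cast_id]
  rw [mul_comm, ← hchar, ZMod.stdAddChar_coe]
  congr 2
  push_cast
  ring

theorem support_dft (N : ℕ) [NeZero N] (f : ZMod N → ℂ) :
    Function.support (dft N f) = Function.support (𝓕 f) := by
  rw [dft_eq_smul]
  refine Function.support_const_smul_of_ne_zero _ _ ?_
  exact_mod_cast (Real.rpow_pos_of_pos (by exact_mod_cast (NeZero.pos N)) _).ne'

/-- If the indicator function of a nonempty set S saturates the Donoho–Stark
uncertainty principle, then S is a coset of a subgroup of ZMod N. -/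
theorem projection_minimizer_is_coset (N : ℕ) [NeZero N] (S : Set (ZMod N))
    (hS : S.Nonempty)
    (hmin : S.ncard *
      (Function.support (dft N (Set.indicator S (fun _ => (1 : ℂ))))).ncard = N) :
    ∃ (a : ZMod N) (H : AddSubgroup (ZMod N)), S = {x : ZMod N | x - a ∈ H} := by
  classical
  obtain ⟨A, rfl⟩ := S.toFinite.exists_finset_coe
  obtain ⟨a, ha⟩ := hS
  rw [support_dft, Set.ncard_coe_finset] at hmin
  set T := (Function.support (𝓕 ((A : Set (ZMod N)).indicator fun _ ↦ (1 : ℂ)))).toFinset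
  have hAT : #A * #T = N := by rwa [← Set.ncard_eq_toFinset_card']
  have hconst (k) (hk : k ∈ T) : ∀ x ∈ A, ∀ y ∈ A, x * k = y * k := by
    rw [← ZMod.norm_dft_indicator_one_eq_card_iff]
    exact ZMod.norm_dft_indicator_one_eq_card_of_card_mul_ncard_support_eq A hmin
      (by simpa [T] using hk)
  let H : AddSubgroup (ZMod N) := ⨅ k ∈ T, (AddMonoidHom.mulRight k).ker
  have hmemH (x) : x - a ∈ H ↔ ∀ k ∈ T, x * k = a * k := by
    simp [H, AddSubgroup.mem_iInf, sub_mul, sub_eq_zero]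
  set C : Finset (ZMod N) := {x | x - a ∈ H}
  have hAC : A ⊆ C := fun x hx ↦ by simpa [C, hmemH] using fun k hk ↦ hconst k hk x hx a ha
  have hCT : #C * #T ≤ N := ZMod.card_mul_card_le_of_forall_mul_eq C T fun k hk x hx y hy ↦ by
    simp only [C, mem_filter, mem_univ, true_and, hmemH] at hx hy
    rw [hx k hk, hy k hk]
  have hTpos : 0 < #T := Nat.pos_of_ne_zero fun h ↦ NeZero.ne N (by rw [← hAT, h, mul_zero])
  have hAC' : A = C :=
    eq_of_subset_of_card_le hAC (Nat.le_of_mul_le_mul_right (hCT.trans hAT.ge) hTpos)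
  exact ⟨a, H, by rw [hAC']; ext; simp [C]⟩
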